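/- Let γ = (γ_n)_{n∈ℤ₊} be a real sequence satisfying γ_{n+1} = Σ_{j=0}^{r-1} a_j γ_{n-j} for all n ≥ r-1, with a_{r-1} ≠ 0. If the Hankel matrix M_{r-1}(2n_0) = (γ_{2n_0+i+j})_{0≤i,j≤r-1} is positive semidefinite for some n_0 ≥ 0, then M_n(0) = (γ_{i+j})_{0≤i,j≤n} is positive semidefinite for every n ≥ 0 (i.e., the infinite Hankel matrix (γ_{i+j})_{i,j≥0} is positive semidefinite). -/

import Mathlib

/-!
Let `L` be the Riesz functional of `γ`, `L(Xⁱ) = γᵢ`, so that `M_n(k)` is the Gram matrix of the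
form `(p, q) ↦ L(Xᵏ p q)` on polynomials of degree `≤ n`. The recurrence says that `L` kills the
ideal generated by its characteristic polynomial `c`, a monic polynomial of degree `r`, and
`a_{r-1} ≠ 0` says `c(0) ≠ 0`, i.e. `X` is invertible modulo `c`. Hence every `p` is congruent
modulo `c` to `X^{n₀} q` with `deg q < r`, and `L(p²) = L(X^{2n₀} q²) ≥ 0` by positivity of
`M_{r-1}(2n₀)`.
-/

open Polynomial Matrix

noncomputable def rieszFunctional {R : Type*} [CommSemiring R] (γ : ℕ → R) : R[X] →ₗ[R] R :=
  lsum fun n => γ n • LinearMap.id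

@[simp]
theorem rieszFunctional_monomial {R : Type*} [CommSemiring R] (γ : ℕ → R) (n : ℕ) (c : R) :
    rieszFunctional γ (monomial n c) = c * γ n := by
  simp [rieszFunctional, mul_comm]

theorem rieszFunctional_X_pow_mul_sum_sq {R : Type*} [CommSemiring R] (γ : ℕ → R) (k n : ℕ)
    (v : Fin n → R) :
    rieszFunctional γ (X ^ k * (∑ i : Fin n, monomial i (v i)) ^ 2) =
      ∑ i : Fin n, ∑ j : Fin n, v i * v j * γ (k + i + j) := by
  rw [sq, Finset.sum_mul_sum]
  simp only [Finset.mul_sum, map_sum, X_pow_eq_monomial, monomial_mul_monomial,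
    rieszFunctional_monomial, one_mul, add_assoc]

def hankelMatrix {R : Type*} (γ : ℕ → R) (k n : ℕ) : Matrix (Fin n) (Fin n) R :=
  of fun i j => γ (k + i + j)

theorem hankelMatrix_isSymm {R : Type*} (γ : ℕ → R) (k n : ℕ) : (hankelMatrix γ k n).IsSymm := by
  ext i j
  simp only [hankelMatrix, transpose_apply, of_apply, add_right_comm]

theorem posSemidef_hankelMatrix_iff (γ : ℕ → ℝ) (k n : ℕ) :
    (hankelMatrix γ k n).PosSemidef ↔
      ∀ q ∈ degreeLT ℝ n, 0 ≤ rieszFunctional γ (X ^ k * q ^ 2) := by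
  have hquad (v : Fin n → ℝ) : star v ⬝ᵥ hankelMatrix γ k n *ᵥ v =
      rieszFunctional γ (X ^ k * ((degreeLTEquiv ℝ n).symm v : ℝ[X]) ^ 2) := by
    simp only [degreeLTEquiv, LinearEquiv.coe_symm_mk', rieszFunctional_X_pow_mul_sum_sq,
      dotProduct, mulVec, hankelMatrix, of_apply, star_trivial, Finset.mul_sum]
    exact Finset.sum_congr rfl fun i _ => Finset.sum_congr rfl fun j _ => by ring
  simp only [posSemidef_iff_dotProduct_mulVec, hquad,
    and_iff_right (isHermitian_iff_isSymm.mpr (hankelMatrix_isSymm γ k n))]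
  refine ⟨fun h q hq => ?_, fun h v => h _ (Submodule.coe_mem _)⟩
  simpa using h (degreeLTEquiv ℝ n ⟨q, hq⟩)

namespace Polynomial

variable {R : Type*} [CommRing R]

theorem isCoprime_X_of_isUnit_coeff_zero {p : R[X]} (hp : IsUnit (p.coeff 0)) :
    IsCoprime X p := by
  obtain ⟨b, hb⟩ := (hp.map C).exists_left_inv
  exact ⟨-(b * p.divX), b, by linear_combination -b * X_mul_divX_add p + hb⟩

theorem exists_degree_lt_dvd_sub_X_pow_mul [Nontrivial R] {c : R[X]} (hc : c.Monic)
    (hX : IsCoprime X c) (m : ℕ) (p : R[X]) : ∃ q, q.degree < c.degree ∧ c ∣ p - X ^ m * q := by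
  obtain ⟨u, v, huv⟩ := hX.pow_left (m := m)
  refine ⟨(u * p) %ₘ c, degree_modByMonic_lt _ hc, X ^ m * ((u * p) /ₘ c) + v * p, ?_⟩
  linear_combination (-p) * huv - X ^ m * modByMonic_add_div (u * p) c

theorem exists_degree_lt_map_sq_eq [Nontrivial R] {M F : Type*} [AddCommMonoid M]
    [FunLike F R[X] M] [AddMonoidHomClass F R[X] M] {L : F} {c : R[X]} (hc : c.Monic)
    (hX : IsCoprime X c) (hL : ∀ s, L (c * s) = 0) (m : ℕ) (p : R[X]) :
    ∃ q, q.degree < c.degree ∧ L (p ^ 2) = L (X ^ (2 * m) * q ^ 2) := by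
  obtain ⟨q, hq, s, hs⟩ := exists_degree_lt_dvd_sub_X_pow_mul hc hX m p
  refine ⟨q, hq, ?_⟩
  have hsq : p ^ 2 = X ^ (2 * m) * q ^ 2 + c * (s * (p + X ^ m * q)) := by
    linear_combination (p + X ^ m * q) * hs
  rw [hsq, map_add, hL, add_zero]

end Polynomial

namespace LinearRecurrence

variable {R : Type*} [CommRing R]

theorem isSolution_mk_rev {r : ℕ} (hr : 0 < r) {a : Fin r → R} {u : ℕ → R}
    (hu : ∀ n, r - 1 ≤ n → u (n + 1) = ∑ j : Fin r, a j * u (n - j)) :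
    (⟨r, fun i => a i.rev⟩ : LinearRecurrence R).IsSolution u := by
  intro m
  have hm := hu (m + r - 1) (by omega)
  rw [Nat.sub_add_cancel (by omega)] at hm
  rw [hm, ← Equiv.sum_comp Fin.revPerm]
  refine Finset.sum_congr rfl fun i _ => ?_
  simp only [Fin.revPerm_apply, Fin.val_rev]
  congr 2
  omega

variable (E : LinearRecurrence R)

theorem charPoly_coeff_zero (h : 0 < E.order) : E.charPoly.coeff 0 = -E.coeffs ⟨0, h⟩ := by
  rw [charPoly, coeff_sub, coeff_monomial, if_neg h.ne', finsetSum_coeff,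
    Finset.sum_eq_single ⟨0, h⟩]
  · simp
  · intro i _ hi
    rw [coeff_monomial, if_neg (fun h0 => hi (Fin.ext h0))]
  · simp

theorem IsSolution.rieszFunctional_charPoly_mul {u : ℕ → R} (hu : E.IsSolution u) (s : R[X]) :
    rieszFunctional u (E.charPoly * s) = 0 := by
  induction s using Polynomial.induction_on' with
  | add p q hp hq => rw [mul_add, map_add, hp, hq, add_zero]
  | monomial m c =>
    have hX : rieszFunctional u (E.charPoly * X ^ m) = 0 := by
      simp only [charPoly, sub_mul, Finset.sum_mul, X_pow_eq_monomial, monomial_mul_monomial,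
        map_sub, map_sum, rieszFunctional_monomial, one_mul, mul_one]
      rw [add_comm, hu m, sub_eq_zero]
      simp only [add_comm m]
    rw [← C_mul_X_pow_eq_monomial, mul_left_comm, ← smul_eq_C_mul, map_smul, hX, smul_zero]

end LinearRecurrence

/-- Let `γ` be a real sequence with `γ_{n+1} = Σ_{j=0}^{r-1} a_j γ_{n-j}`
for all `n ≥ r-1` and `a_{r-1} ≠ 0`.  If the Hankel matrix
`M_{r-1}(2n_0) = (γ_{2n_0+i+j})_{0≤i,j≤r-1}` is positive semidefinite for some `n_0 ≥ 0`,
then `M_n(0) = (γ_{i+j})_{0≤i,j≤n}` is positive semidefinite for every `n ≥ 0` (i.e. the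
infinite Hankel matrix `(γ_{i+j})` is positive semidefinite). -/
theorem stmt_11 (r : ℕ) (hr : 0 < r) (γ : ℕ → ℝ) (a : Fin r → ℝ)
    (ha : a ⟨r - 1, by omega⟩ ≠ 0)
    (hrec : ∀ n : ℕ, r - 1 ≤ n → γ (n + 1) = ∑ j : Fin r, a j * γ (n - (j : ℕ)))
    (n0 : ℕ)
    (hpsd : (Matrix.of fun i j : Fin (r - 1 + 1) =>
        γ (2 * n0 + (i : ℕ) + (j : ℕ))).PosSemidef) :
    ∀ n : ℕ, (Matrix.of fun i j : Fin (n + 1) => γ ((i : ℕ) + (j : ℕ))).PosSemidef := by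
  set E : LinearRecurrence ℝ := ⟨r, fun i => a i.rev⟩
  have hX : IsCoprime X E.charPoly := by
    refine isCoprime_X_of_isUnit_coeff_zero ?_
    have hrev : (⟨0, hr⟩ : Fin r).rev = ⟨r - 1, by omega⟩ := Fin.ext (by simp)
    rw [E.charPoly_coeff_zero hr]
    simpa [E, hrev] using ha
  have hpos : ∀ q ∈ degreeLT ℝ r, 0 ≤ rieszFunctional γ (X ^ (2 * n0) * q ^ 2) := by
    simpa only [Nat.sub_add_cancel hr] using (posSemidef_hankelMatrix_iff γ (2 * n0) _).mp hpsd
  have hsq (p : ℝ[X]) : 0 ≤ rieszFunctional γ (p ^ 2) := by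
    obtain ⟨q, hq, hpq⟩ := exists_degree_lt_map_sq_eq E.charPoly_monic hX
      ((LinearRecurrence.isSolution_mk_rev hr hrec).rieszFunctional_charPoly_mul) n0 p
    rw [hpq]
    exact hpos q (mem_degreeLT.mpr (by simpa [E] using hq))
  intro n
  simpa [hankelMatrix] using
    (posSemidef_hankelMatrix_iff γ 0 (n + 1)).mpr fun q _ => by simpa using hsq q
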